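/- arXiv:1206.3846 — 2 statements merged into one kernel-verified Lean document; each statement's English description precedes it below -/
import Mathlib

section
/- With F as above, F''(m_β) > 2F(0)/m_β². Equivalently, writing the condition out: -Ĵ₀ + (1/β)·1/(1-m_β²) > (2/m_β²)·F(0), where F(0) = a(0) - a(m_β). -/
/-!
Since `m_β = tanh (β Ĵ₀ m_β)`, the identity `log ((1 + m_β) / (1 - m_β)) = 2 β Ĵ₀ m_β`
eliminates the entropy term of `a(m_β)`, leaving
`a(0) - a(m_β) = -(Ĵ₀ m_β² + β⁻¹ log (1 - m_β²)) / 2`. The claim then reduces to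
`1 - 1 / (1 - m_β²) < log (1 - m_β²)`, the strict form of `1 - x⁻¹ ≤ log x`.
-/

namespace Real

lemma one_sub_inv_lt_log {x : ℝ} (hx : 0 < x) (hx1 : x ≠ 1) : 1 - x⁻¹ < log x := by
  have h := log_lt_sub_one_of_pos (inv_pos.2 hx) (inv_ne_one.2 hx1)
  rw [log_inv] at h
  linarith

lemma log_one_add_div_one_sub_of_eq_tanh {m x : ℝ} (hm : m = tanh x) :
    log ((1 + m) / (1 - m)) = 2 * x := by
  subst hm
  have h := artanh_eq_half_log ⟨(neg_one_lt_tanh x).le, (tanh_lt_one x).le⟩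
  rw [artanh_tanh] at h
  linarith

lemma mixing_entropy_eq {m : ℝ} (h1 : -1 < m) (h2 : m < 1) :
    (1 + m) / 2 * log ((1 + m) / 2) + (1 - m) / 2 * log ((1 - m) / 2)
      = (log (1 - m ^ 2) + m * log ((1 + m) / (1 - m))) / 2 - log 2 := by
  have hp : 1 + m ≠ 0 := by linarith
  have hq : 1 - m ≠ 0 := by linarith
  rw [show 1 - m ^ 2 = (1 + m) * (1 - m) by ring, log_mul hp hq, log_div hp hq,
    log_div hp two_ne_zero, log_div hq two_ne_zero]
  ring

end Real

open Real

noncomputable def meanFieldFreeEnergy (β J t : ℝ) : ℝ :=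
  -J * t ^ 2 / 2 +
    (1 / β) * ((1 + t) / 2 * log ((1 + t) / 2) + (1 - t) / 2 * log ((1 - t) / 2))

lemma meanFieldFreeEnergy_zero_sub_of_eq_tanh {β J m : ℝ} (hβ : β ≠ 0) (h1 : -1 < m)
    (h2 : m < 1) (hm : m = tanh (β * J * m)) :
    meanFieldFreeEnergy β J 0 - meanFieldFreeEnergy β J m =
      -(J * m ^ 2 + log (1 - m ^ 2) / β) / 2 := by
  unfold meanFieldFreeEnergy
  rw [mixing_entropy_eq (by norm_num) (by norm_num), mixing_entropy_eq h1 h2,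
    log_one_add_div_one_sub_of_eq_tanh hm]
  simp only [zero_pow two_ne_zero, sub_zero, log_one]
  field_simp
  ring

theorem stmt_2_general (β J₀ mβ : ℝ) (hβ : 0 < β)
    (hm0 : 0 < mβ) (hm1 : mβ < 1) (hm : mβ = Real.tanh (β * J₀ * mβ))
    (a : ℝ → ℝ)
    (ha : ∀ t, a t = -J₀ * t ^ 2 / 2 +
      (1 / β) * ((1 + t) / 2 * Real.log ((1 + t) / 2)
        + (1 - t) / 2 * Real.log ((1 - t) / 2))) :
    -J₀ + (1 / β) * (1 / (1 - mβ ^ 2)) > (2 / mβ ^ 2) * (a 0 - a mβ) := by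
  obtain rfl : a = meanFieldFreeEnergy β J₀ := funext ha
  rw [meanFieldFreeEnergy_zero_sub_of_eq_tanh hβ.ne' (by linarith) hm1 hm]
  have hm2 : 0 < mβ ^ 2 := by positivity
  have hu : 0 < 1 - mβ ^ 2 := by nlinarith
  have hlog := one_sub_inv_lt_log hu (by linarith)
  have hdiff : -J₀ + 1 / β * (1 / (1 - mβ ^ 2)) -
        2 / mβ ^ 2 * (-(J₀ * mβ ^ 2 + log (1 - mβ ^ 2) / β) / 2) =
      (log (1 - mβ ^ 2) - (1 - (1 - mβ ^ 2)⁻¹)) / (β * mβ ^ 2) := by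
    field_simp
    ring
  have hpos := div_pos (sub_pos.2 hlog) (mul_pos hβ hm2)
  linarith

/-- With `F` the double-well free energy, `F''(m_β) > 2 F(0) / m_β²`, i.e.
`-Ĵ₀ + (1/β) / (1 - m_β²) > (2 / m_β²) * F(0)` where `F(0) = a(0) - a(m_β)`. -/
theorem stmt_2 (β J₀ mβ : ℝ) (hβ : 0 < β) (hJ : 0 < J₀) (h : 1 < β * J₀)
    (hm0 : 0 < mβ) (hm1 : mβ < 1) (hm : mβ = Real.tanh (β * J₀ * mβ))
    (a : ℝ → ℝ)
    (ha : ∀ t, a t = -J₀ * t ^ 2 / 2 +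
      (1 / β) * ((1 + t) / 2 * Real.log ((1 + t) / 2)
        + (1 - t) / 2 * Real.log ((1 - t) / 2))) :
    -J₀ + (1 / β) * (1 / (1 - mβ ^ 2)) > (2 / mβ ^ 2) * (a 0 - a mβ) :=
  stmt_2_general β J₀ mβ hβ hm0 hm1 hm a ha
end

section
/- With F as above and F̃(t) = (F(0)/(2m_β²))(|t| - m_β)², one has F̃(t) ≤ (1/2)F(t) for all t ∈ (-1,1). Equivalently, F(t) ≥ (F(0)/m_β²)(|t| - m_β)². -/
/-!
Write `m = mβ`, `c = F(0)/m²` and `G(s) = F(s) - c (s - m)²` on `[0, 1)`. Then `G(0) = G(m) = 0`,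
and `G'(m) = a'(m) = -J₀ m + artanh(m)/β = 0` since `m = tanh(βJ₀m)`. The second derivative
`G'' = 1/(β(1 - s²)) - J₀ - 2c` increases on `[0, 1)`, so `G'` is convex there. By Rolle `G'` also
vanishes at some `ξ ∈ (0, m)`; convexity makes `G'` nonpositive on `[ξ, m]` and nonnegative
elsewhere, so `G` increases, decreases, then increases again, and `G ≥ min (G 0) (G m) = 0`.
Evenness of `F` extends the bound from `[0, 1)` to `(-1, 1)`.
-/

open Set Real

namespace Real

lemma hasDerivAt_artanh {x : ℝ} (hx : x ∈ Ioo (-1) 1) : HasDerivAt artanh (1 - x ^ 2)⁻¹ x := by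
  have hp : 0 < 1 + x := by linarith [hx.1]
  have hn : 0 < 1 - x := by linarith [hx.2]
  have heq : (fun y => 1 / 2 * log ((1 + y) / (1 - y))) =ᶠ[nhds x] artanh := by
    filter_upwards [Ioo_mem_nhds hx.1 hx.2] with y hy
    exact (artanh_eq_half_log (Ioo_subset_Icc_self hy)).symm
  have hlog := (((hasDerivAt_id x).const_add 1).div ((hasDerivAt_id x).const_sub 1) hn.ne').log
    (div_pos hp hn).ne'
  refine ((hlog.const_mul (1 / 2)).congr_of_eventuallyEq heq.symm).congr_deriv ?_
  have hsq : 1 - x ^ 2 ≠ 0 := by nlinarith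
  simp only [id, Pi.div_apply]
  field_simp
  ring

end Real

lemma le_of_hasDerivAt_nonneg {f f' : ℝ → ℝ} {x y : ℝ} (hxy : x ≤ y)
    (hf : ∀ z ∈ Icc x y, HasDerivAt f (f' z) z) (hf' : ∀ z ∈ Ioo x y, 0 ≤ f' z) : f x ≤ f y :=
  monotoneOn_of_hasDerivWithinAt_nonneg (convex_Icc x y)
    (fun z hz => (hf z hz).continuousAt.continuousWithinAt)
    (fun z hz => (hf z (interior_subset hz)).hasDerivWithinAt)
    (fun z hz => hf' z (by rwa [interior_Icc] at hz)) ⟨le_rfl, hxy⟩ ⟨hxy, le_rfl⟩ hxy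

lemma convexOn_of_hasDerivAt_of_monotoneOn {D : Set ℝ} (hD : Convex ℝ D) {f f' : ℝ → ℝ}
    (hf : ∀ x ∈ D, HasDerivAt f (f' x) x) (hf' : MonotoneOn f' D) : ConvexOn ℝ D f := by
  refine MonotoneOn.convexOn_of_deriv hD (fun x hx => (hf x hx).continuousAt.continuousWithinAt)
    (fun x hx => (hf x (interior_subset hx)).differentiableAt.differentiableWithinAt) ?_
  exact (hf'.mono interior_subset).congr fun x hx => ((hf x (interior_subset hx)).deriv).symm

lemma ConvexOn.nonneg_of_notMem_Ioo {s : Set ℝ} {g : ℝ → ℝ} (hg : ConvexOn ℝ s g) {ξ m x : ℝ}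
    (hξ : ξ ∈ s) (hm : m ∈ s) (hξm : ξ < m) (hgξ : g ξ = 0) (hgm : g m = 0) (hx : x ∈ s)
    (hx' : x ∉ Ioo ξ m) : 0 ≤ g x := by
  rcases le_or_gt x ξ with hxξ | hξx
  · rcases hxξ.lt_or_eq with hxξ | rfl
    · have := hg.slope_mono_adjacent hx hm hxξ hξm
      rw [hgξ, hgm, sub_self, zero_div, zero_sub, neg_div, neg_nonpos] at this
      simpa using (le_div_iff₀ (sub_pos.2 hxξ)).1 this
    · exact hgξ.ge
  · rcases (not_lt.1 fun h => hx' ⟨hξx, h⟩).lt_or_eq with hmx | rfl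
    · have := hg.slope_mono_adjacent hξ hx hξm hmx
      rw [hgξ, hgm, sub_self, zero_div, sub_zero] at this
      simpa using (le_div_iff₀ (sub_pos.2 hmx)).1 this
    · exact hgm.ge

lemma nonneg_of_convexOn_deriv {f f' : ℝ → ℝ} {a m b x : ℝ} (ham : a < m) (hmb : m < b)
    (hf : ∀ y ∈ Ico a b, HasDerivAt f (f' y) y) (hf' : ConvexOn ℝ (Ico a b) f')
    (ha : f a = 0) (hm : f m = 0) (hm' : f' m = 0) (hx : x ∈ Ico a b) : 0 ≤ f x := by
  have hmI : m ∈ Ico a b := ⟨ham.le, hmb⟩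
  have hfI : ∀ {u v}, a ≤ u → v < b → ∀ y ∈ Icc u v, HasDerivAt f (f' y) y :=
    fun hu hv y hy => hf y ⟨hu.trans hy.1, hy.2.trans_lt hv⟩
  obtain ⟨ξ, hξ, hξ'⟩ : ∃ ξ ∈ Ioo a m, f' ξ = 0 :=
    exists_hasDerivAt_eq_zero ham
      (fun y hy => (hfI le_rfl hmb y hy).continuousAt.continuousWithinAt)
      (ha.trans hm.symm) fun y hy => hfI le_rfl hmb y (Ioo_subset_Icc_self hy)
  have hξI : ξ ∈ Ico a b := ⟨hξ.1.le, hξ.2.trans hmb⟩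
  have hf'_nonneg : ∀ y ∈ Ico a b, y ∉ Ioo ξ m → 0 ≤ f' y :=
    fun y hy => hf'.nonneg_of_notMem_Ioo hξI hmI hξ.2 hξ' hm' hy
  rcases le_or_gt x ξ with hxξ | hξx
  · refine ha ▸ le_of_hasDerivAt_nonneg hx.1 (hfI le_rfl hx.2) fun y hy => hf'_nonneg y ?_ ?_
    · exact ⟨hy.1.le, hy.2.trans hx.2⟩
    · exact fun h => lt_asymm (hy.2.trans_le hxξ) h.1
  rcases le_or_gt x m with hxm | hmx
  · have hf'_nonpos : ∀ y ∈ Ioo x m, f' y ≤ 0 := fun y hy => by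
      have := hf'.le_on_segment hξI hmI
        (by rw [segment_eq_Icc hξ.2.le]; exact ⟨(hξx.trans hy.1).le, hy.2.le⟩)
      rwa [hξ', hm', max_self] at this
    have := le_of_hasDerivAt_nonneg hxm (f := fun y => -f y) (fun y hy => (hfI hx.1 hmb y hy).neg)
      fun y hy => neg_nonneg.2 (hf'_nonpos y hy)
    simp only [neg_le_neg_iff] at this
    exact hm ▸ this
  · exact hm ▸ le_of_hasDerivAt_nonneg hmx.le (hfI ham.le hx.2)
      fun y hy => hf'_nonneg y ⟨(ham.trans hy.1).le, hy.2.trans hx.2⟩ fun h => lt_asymm hy.1 h.2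

namespace CurieWeiss

noncomputable def freeEnergy (β J₀ t : ℝ) : ℝ :=
  -J₀ * t ^ 2 / 2 +
    (1 / β) * ((1 + t) / 2 * log ((1 + t) / 2) + (1 - t) / 2 * log ((1 - t) / 2))

lemma freeEnergy_neg (β J₀ t : ℝ) : freeEnergy β J₀ (-t) = freeEnergy β J₀ t := by
  simp only [freeEnergy, sub_neg_eq_add, ← sub_eq_add_neg]
  ring

lemma freeEnergy_abs (β J₀ t : ℝ) : freeEnergy β J₀ |t| = freeEnergy β J₀ t := by
  rcases abs_choice t with h | h <;> rw [h]
  exact freeEnergy_neg β J₀ t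

lemma hasDerivAt_freeEnergy (β J₀ : ℝ) {t : ℝ} (ht : t ∈ Ioo (-1) 1) :
    HasDerivAt (freeEnergy β J₀) (-J₀ * t + artanh t / β) t := by
  have hp : 0 < 1 + t := by linarith [ht.1]
  have hn : 0 < 1 - t := by linarith [ht.2]
  have hup := (hasDerivAt_mul_log (by positivity : (1 + t) / 2 ≠ 0)).comp t
    (((hasDerivAt_id t).const_add 1).div_const 2)
  have hdown := (hasDerivAt_mul_log (by positivity : (1 - t) / 2 ≠ 0)).comp t
    (((hasDerivAt_id t).const_sub 1).div_const 2)
  have h : HasDerivAt (freeEnergy β J₀) _ t :=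
    (((hasDerivAt_pow 2 t).const_mul (-J₀)).div_const 2).add ((hup.add hdown).const_mul (1 / β))
  refine h.congr_deriv ?_
  rw [artanh_eq_half_log (Ioo_subset_Icc_self ht), log_div hp.ne' hn.ne',
    log_div hp.ne' two_ne_zero, log_div hn.ne' two_ne_zero]
  norm_num
  ring

lemma quadratic_le_freeEnergy_sub {β J₀ m s : ℝ} (hβ : 0 < β) (hm0 : 0 < m) (hm1 : m < 1)
    (hm : m = tanh (β * J₀ * m)) (hs : s ∈ Ico 0 1) :
    (freeEnergy β J₀ 0 - freeEnergy β J₀ m) / m ^ 2 * (s - m) ^ 2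
      ≤ freeEnergy β J₀ s - freeEnergy β J₀ m := by
  set c := (freeEnergy β J₀ 0 - freeEnergy β J₀ m) / m ^ 2
  have hI : ∀ y ∈ Ico (0 : ℝ) 1, y ∈ Ioo (-1) 1 := fun y hy => ⟨by linarith [hy.1], hy.2⟩
  have hG' : ∀ y ∈ Ico (0 : ℝ) 1,
      HasDerivAt (fun s => freeEnergy β J₀ s - freeEnergy β J₀ m - c * (s - m) ^ 2)
        (-J₀ * y + artanh y / β - 2 * c * (y - m)) y := fun y hy => by
    refine (((hasDerivAt_freeEnergy β J₀ (hI y hy)).sub_const _).sub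
      ((((hasDerivAt_id y).sub_const m).pow 2).const_mul c)).congr_deriv ?_
    simp only [id, Nat.cast_ofNat, Nat.add_one_sub_one, pow_one]
    ring
  have hG'' : ∀ y ∈ Ico (0 : ℝ) 1, HasDerivAt (fun s => -J₀ * s + artanh s / β - 2 * c * (s - m))
      (-J₀ + (1 - y ^ 2)⁻¹ / β - 2 * c) y := fun y hy => by
    refine ((((hasDerivAt_id y).const_mul (-J₀)).add
      ((hasDerivAt_artanh (hI y hy)).div_const β)).sub
        (((hasDerivAt_id y).sub_const m).const_mul (2 * c))).congr_deriv ?_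
    ring
  have hG''_mono : MonotoneOn (fun y => -J₀ + (1 - y ^ 2)⁻¹ / β - 2 * c) (Ico 0 1) :=
    fun x hx y hy hxy => by
      have : 0 < 1 - y ^ 2 := by nlinarith [hy.1, hy.2]
      have : x ^ 2 ≤ y ^ 2 := pow_le_pow_left₀ hx.1 hxy 2
      dsimp only
      gcongr
  have := nonneg_of_convexOn_deriv hm0 hm1 hG'
    (convexOn_of_hasDerivAt_of_monotoneOn (convex_Ico 0 1) hG'' hG''_mono)
    (by simp only [c]; field_simp; ring) (by ring)
    (by rw [hm, artanh_tanh, ← hm]; field_simp; ring) hs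
  linarith

end CurieWeiss

theorem stmt_4_general (β J₀ mβ : ℝ) (hβ : 0 < β)
    (hm0 : 0 < mβ) (hm1 : mβ < 1) (hm : mβ = Real.tanh (β * J₀ * mβ))
    (a F Ftilde : ℝ → ℝ)
    (ha : ∀ t, a t = -J₀ * t ^ 2 / 2 +
      (1 / β) * ((1 + t) / 2 * Real.log ((1 + t) / 2)
        + (1 - t) / 2 * Real.log ((1 - t) / 2)))
    (hF : ∀ t, F t = a t - a mβ)
    (hFt : ∀ t, Ftilde t = (F 0 / (2 * mβ ^ 2)) * (|t| - mβ) ^ 2) :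
    ∀ t ∈ Set.Ioo (-1 : ℝ) 1,
      Ftilde t ≤ F t / 2 ∧ (F 0 / mβ ^ 2) * (|t| - mβ) ^ 2 ≤ F t := by
  obtain rfl : a = CurieWeiss.freeEnergy β J₀ := funext ha
  intro t ht
  have hbound : F 0 / mβ ^ 2 * (|t| - mβ) ^ 2 ≤ F t := by
    rw [hF, hF, ← CurieWeiss.freeEnergy_abs β J₀ t]
    exact CurieWeiss.quadratic_le_freeEnergy_sub hβ hm0 hm1 hm ⟨abs_nonneg t, abs_lt.2 ht⟩
  refine ⟨?_, hbound⟩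
  have : Ftilde t = F 0 / mβ ^ 2 * (|t| - mβ) ^ 2 / 2 := by
    rw [hFt]
    ring
  linarith

/-- With `F(t) = a(t) - a(m_β)` and `F̃(t) = (F(0)/(2 m_β²)) (|t| - m_β)²`, one has
`F̃(t) ≤ F(t)/2` on `(-1,1)`, i.e. `F(t) ≥ (F(0)/m_β²) (|t| - m_β)²`. -/
theorem stmt_4 (β J₀ mβ : ℝ) (hβ : 0 < β) (hJ : 0 < J₀) (h : 1 < β * J₀)
    (hm0 : 0 < mβ) (hm1 : mβ < 1) (hm : mβ = Real.tanh (β * J₀ * mβ))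
    (a F Ftilde : ℝ → ℝ)
    (ha : ∀ t, a t = -J₀ * t ^ 2 / 2 +
      (1 / β) * ((1 + t) / 2 * Real.log ((1 + t) / 2)
        + (1 - t) / 2 * Real.log ((1 - t) / 2)))
    (hF : ∀ t, F t = a t - a mβ)
    (hFt : ∀ t, Ftilde t = (F 0 / (2 * mβ ^ 2)) * (|t| - mβ) ^ 2) :
    ∀ t ∈ Set.Ioo (-1 : ℝ) 1,
      Ftilde t ≤ F t / 2 ∧ (F 0 / mβ ^ 2) * (|t| - mβ) ^ 2 ≤ F t :=
  stmt_4_general β J₀ mβ hβ hm0 hm1 hm a F Ftilde ha hF hFt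
end
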